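/- Anisotropic Neyman–Pearson upper-bound lemma: Let X ~ N(x, Σ), Y ~ N(x+δ, Σ) with Σ = diag(σ²), λ = δ ⊘ σ^{∘2} ≠ 0, and let h : ℝᵈ → {0,1} be measurable. If S = {z : λᵀz ≥ β} and ℙ(h(X)=1) ≤ ℙ(X ∈ S), then ℙ(h(Y)=1) ≤ ℙ(Y ∈ S). -/

import Mathlib

open MeasureTheory ProbabilityTheory
open scoped ENNReal NNReal

noncomputable def Phi (x : ℝ) : ℝ := ((gaussianReal 0 1) (Set.Iic x)).toReal

noncomputable def PhiInv : ℝ → ℝ := Function.invFun Phi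

noncomputable def gaussPi (d : ℕ) (m s : Fin d → ℝ) : Measure (Fin d → ℝ) :=
  Measure.pi fun i => gaussianReal (m i) ((s i ^ 2).toNNReal)

/-!
The law of `Y` has density `exp (λᵀz - C)` with respect to the law of `X`, an increasing function
of the statistic `λᵀz`, so `S` is a superlevel set `{G ≥ c}` of this likelihood ratio `G`.
For `A = {h = 1}`, `P(X ∈ A) ≤ P(X ∈ S)` gives `P(X ∈ A \ S) ≤ P(X ∈ S \ A)`, and since `G ≤ c`
on `A \ S` while `G ≥ c` on `S \ A`, the `G`-weighted masses compare the same way.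
-/

section NeymanPearson

variable {α : Type*} [MeasurableSpace α] {μ : Measure α} {A S : Set α}

theorem measure_sdiff_le_measure_sdiff_of_le (hA : MeasurableSet A) (hS : MeasurableSet S)
    (hAS_top : μ (A ∩ S) ≠ ∞) (hAS : μ A ≤ μ S) : μ (A \ S) ≤ μ (S \ A) := by
  refine (ENNReal.add_le_add_iff_left hAS_top).mp ?_
  rw [measure_inter_add_sdiff A hS, Set.inter_comm, measure_inter_add_sdiff S hA]
  exact hAS

theorem withDensity_apply_le_of_measure_le_of_threshold [IsFiniteMeasure μ] {G : α → ℝ≥0∞}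
    {c : ℝ≥0∞} (hA : MeasurableSet A) (hS : MeasurableSet S) (hGS : ∀ z ∈ S, c ≤ G z)
    (hGSc : ∀ z ∉ S, G z ≤ c) (hAS : μ A ≤ μ S) :
    μ.withDensity G A ≤ μ.withDensity G S := by
  have hdiff := measure_sdiff_le_measure_sdiff_of_le hA hS (measure_ne_top μ _) hAS
  rw [withDensity_apply _ hA, withDensity_apply _ hS, ← lintegral_inter_add_sdiff G A hS,
    ← lintegral_inter_add_sdiff G S hA, Set.inter_comm S A]
  refine add_le_add le_rfl ?_
  calc ∫⁻ z in A \ S, G z ∂μ ≤ ∫⁻ _ in A \ S, c ∂μ :=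
        setLIntegral_mono' (hA.diff hS) fun z hz => hGSc z hz.2
    _ = c * μ (A \ S) := setLIntegral_const _ _
    _ ≤ c * μ (S \ A) := by gcongr
    _ = ∫⁻ _ in S \ A, c ∂μ := (setLIntegral_const _ _).symm
    _ ≤ ∫⁻ z in S \ A, G z ∂μ := setLIntegral_mono' (hS.diff hA) fun z hz => hGS z hz.1

theorem withDensity_comp_apply_le_of_measure_le_superlevel [IsFiniteMeasure μ] {T : α → ℝ}
    {φ : ℝ → ℝ≥0∞} (hφ : Monotone φ) (hT : Measurable T) {β : ℝ} (hA : MeasurableSet A)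
    (hAS : μ A ≤ μ {z | β ≤ T z}) :
    μ.withDensity (φ ∘ T) A ≤ μ.withDensity (φ ∘ T) {z | β ≤ T z} :=
  withDensity_apply_le_of_measure_le_of_threshold hA (measurableSet_le measurable_const hT)
    (fun _ hz => hφ hz) (fun _ hz => hφ (not_le.mp hz).le) hAS

end NeymanPearson

section ProductDensity

variable {ι : Type*} [Fintype ι] {α : ι → Type*} [∀ i, MeasurableSpace (α i)]
  (μ : ∀ i, Measure (α i)) [∀ i, IsProbabilityMeasure (μ i)] {f : ∀ i, α i → ℝ≥0∞}

theorem lintegral_pi_prod_eq_prod_lintegral (hf : ∀ i, Measurable (f i)) :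
    ∫⁻ z, ∏ i, f i (z i) ∂Measure.pi μ = ∏ i, ∫⁻ t, f i t ∂μ i := by
  have hindep : iIndepFun (fun i (z : ∀ i, α i) => f i (z i)) (Measure.pi μ) :=
    (iIndepFun_pi (X := fun _ => id) fun _ => aemeasurable_id).comp f hf
  rw [lintegral_prod_eq_prod_lintegral_of_indepFun _ _ hindep
    fun i => (hf i).comp (measurable_pi_apply i)]
  exact Finset.prod_congr rfl fun i _ => (measurePreserving_eval μ i).lintegral_comp (hf i)

theorem Measure.pi_withDensity (hf : ∀ i, Measurable (f i)) (hf_top : ∀ i x, f i x ≠ ∞) :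
    Measure.pi (fun i => (μ i).withDensity (f i)) =
      (Measure.pi μ).withDensity fun z => ∏ i, f i (z i) := by
  classical
  have := fun i => SigmaFinite.withDensity_of_ne_top' (μ := μ i) (hf_top i)
  refine Measure.pi_eq fun s hs => ?_
  have hind : (Set.univ.pi s).indicator (fun z => ∏ i, f i (z i)) =
      fun z => ∏ i, (s i).indicator (f i) (z i) := by
    funext z
    simp [Set.indicator_apply, Finset.prod_ite_zero]
  rw [withDensity_apply _ (MeasurableSet.univ_pi hs),
    ← lintegral_indicator (MeasurableSet.univ_pi hs), hind,
    lintegral_pi_prod_eq_prod_lintegral μ fun i => (hf i).indicator (hs i)]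
  simp_rw [lintegral_indicator (hs _), withDensity_apply _ (hs _)]

end ProductDensity

theorem gaussianReal_add_eq_withDensity (m δ : ℝ) {v : ℝ≥0} (hv : v ≠ 0) :
    gaussianReal (m + δ) v = (gaussianReal m v).withDensity
      fun t => ENNReal.ofReal (Real.exp (δ / v * (t - m - δ / 2))) := by
  rw [gaussianReal_of_var_ne_zero _ hv, gaussianReal_of_var_ne_zero _ hv,
    ← withDensity_mul _ (measurable_gaussianPDF _ _) (by fun_prop)]
  congr 1
  funext t
  rw [Pi.mul_apply, gaussianPDF, gaussianPDF, ← ENNReal.ofReal_mul (gaussianPDFReal_nonneg _ _ _),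
    gaussianPDFReal, gaussianPDFReal, mul_assoc _ (Real.exp _), ← Real.exp_add]
  congr 3
  have : (v : ℝ) ≠ 0 := by exact_mod_cast hv
  field_simp
  ring

instance (d : ℕ) (m s : Fin d → ℝ) : IsProbabilityMeasure (gaussPi d m s) := by
  unfold gaussPi
  infer_instance

theorem gaussPi_add_eq_withDensity (d : ℕ) (m δ σ : Fin d → ℝ) (hσ : ∀ i, σ i ≠ 0) :
    gaussPi d (m + δ) σ = (gaussPi d m σ).withDensity fun z =>
      ENNReal.ofReal (Real.exp (∑ i, δ i / σ i ^ 2 * (z i - m i - δ i / 2))) := by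
  have hvar : ∀ i, (((σ i ^ 2).toNNReal : ℝ≥0) : ℝ) = σ i ^ 2 :=
    fun i => Real.coe_toNNReal _ (sq_nonneg _)
  have hvar_ne : ∀ i, (σ i ^ 2).toNNReal ≠ 0 := fun i =>
    (Real.toNNReal_pos.mpr (sq_pos_of_ne_zero (hσ i))).ne'
  have hfactor : (fun i => gaussianReal ((m + δ) i) ((σ i ^ 2).toNNReal)) = fun i =>
      (gaussianReal (m i) ((σ i ^ 2).toNNReal)).withDensity fun t =>
        ENNReal.ofReal (Real.exp (δ i / σ i ^ 2 * (t - m i - δ i / 2))) := by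
    funext i
    rw [Pi.add_apply, gaussianReal_add_eq_withDensity _ _ (hvar_ne i), hvar]
  rw [gaussPi, gaussPi, hfactor,
    Measure.pi_withDensity _ (fun _ => by fun_prop) fun _ _ => ENNReal.ofReal_ne_top]
  simp_rw [← ENNReal.ofReal_prod_of_nonneg fun _ _ => (Real.exp_pos _).le, ← Real.exp_sum]

theorem neyman_pearson_upper_general (d : ℕ) (x δ σ : Fin d → ℝ) (hσ : ∀ i, 0 < σ i)
    (lam : Fin d → ℝ) (hlam : ∀ i, lam i = δ i / σ i ^ 2)
    (β : ℝ) (h : (Fin d → ℝ) → Bool) (hh : Measurable h)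
    (S : Set (Fin d → ℝ)) (hS : S = {z | β ≤ ∑ i, lam i * z i})
    (hup : (gaussPi d x σ) {z | h z = true} ≤ (gaussPi d x σ) S) :
    (gaussPi d (x + δ) σ) {z | h z = true} ≤ (gaussPi d (x + δ) σ) S := by
  set C := ∑ i, lam i * (x i + δ i / 2)
  have hdensity : (fun z : Fin d → ℝ =>
      ENNReal.ofReal (Real.exp (∑ i, δ i / σ i ^ 2 * (z i - x i - δ i / 2)))) =
      (fun t => ENNReal.ofReal (Real.exp (t - C))) ∘ fun z => ∑ i, lam i * z i := by
    funext z
    simp only [Function.comp_apply, C, ← Finset.sum_sub_distrib, ← hlam]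
    ring_nf
  rw [gaussPi_add_eq_withDensity d x δ σ fun i => (hσ i).ne', hdensity, hS]
  rw [hS] at hup
  exact withDensity_comp_apply_le_of_measure_le_superlevel
    (fun _ _ hst => ENNReal.ofReal_le_ofReal (Real.exp_le_exp.mpr (by linarith)))
    (by fun_prop) (hh (measurableSet_singleton true)) hup

theorem neyman_pearson_upper (d : ℕ) (x δ σ : Fin d → ℝ) (hσ : ∀ i, 0 < σ i) (hδ : δ ≠ 0)
    (lam : Fin d → ℝ) (hlam : ∀ i, lam i = δ i / σ i ^ 2)
    (β : ℝ) (h : (Fin d → ℝ) → Bool) (hh : Measurable h)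
    (S : Set (Fin d → ℝ)) (hS : S = {z | β ≤ ∑ i, lam i * z i})
    (hup : (gaussPi d x σ) {z | h z = true} ≤ (gaussPi d x σ) S) :
    (gaussPi d (x + δ) σ) {z | h z = true} ≤ (gaussPi d (x + δ) σ) S :=
  neyman_pearson_upper_general d x δ σ hσ lam hlam β h hh S hS hup
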